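/- Let n, k be integers with n > 2k and k ≥ 1. If G is any simple graph whose Kronecker cover K_2 × G is isomorphic to the bipartite Kneser graph H(n,k), then G is isomorphic to G_i(n,k) for some integer i with 0 ≤ i < k. -/

import Mathlib

/-- The involution on `ℕ` swapping `2j ↔ 2j+1` for `j < i`. -/
def sigmaNat (i : ℕ) (x : ℕ) : ℕ :=
  if x < 2 * i then (if x % 2 = 0 then x + 1 else x - 1) else x

lemma sigmaNat_invol (i : ℕ) : Function.Involutive (sigmaNat i) := by
  intro x; unfold sigmaNat; split_ifs <;> omega

/-- `sigmaNat` restricted to `Fin n` (the identity in the out-of-range degenerate case,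
which never occurs when `2 * i ≤ n`). -/
def sigmaFinFun (n i : ℕ) (x : Fin n) : Fin n :=
  if h : sigmaNat i x.val < n then ⟨sigmaNat i x.val, h⟩ else x

lemma sigmaFinFun_invol (n i : ℕ) : Function.Involutive (sigmaFinFun n i) := by
  intro x
  unfold sigmaFinFun
  by_cases h : sigmaNat i x.val < n
  · rw [dif_pos h]
    have h2 : sigmaNat i ((⟨sigmaNat i x.val, h⟩ : Fin n) : ℕ) < n := by
      show sigmaNat i (sigmaNat i x.val) < n
      rw [sigmaNat_invol]; exact x.isLt
    rw [dif_pos h2]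
    ext
    exact sigmaNat_invol i x.val
  · rw [dif_neg h, dif_neg h]

/-- The permutation `σ_i = (1 2)(3 4)⋯(2i-1 2i)` of `[n]`, in `0`-indexed form on `Fin n`:
it swaps `2j ↔ 2j+1` for `j < i` and fixes everything else (assuming `2 * i ≤ n`). -/
def sigmaPerm (n i : ℕ) : Equiv.Perm (Fin n) :=
  Function.Involutive.toPerm _ (sigmaFinFun_invol n i)

/-- The Kneser graph `K(n,k)`: vertices are the `k`-subsets of `[n]`, two subsets being
adjacent iff they are disjoint. -/
def kneserGraph (n k : ℕ) : SimpleGraph {s : Finset (Fin n) // s.card = k} where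
  Adj v w := v ≠ w ∧ Disjoint v.1 w.1
  symm := ⟨fun _ _ h => ⟨h.1.symm, h.2.symm⟩⟩
  loopless := ⟨fun _ h => h.1 rfl⟩

/-- The graph `G_i(n,k)`: vertices are the `k`-subsets of `[n]`, with `v` adjacent to `w`
iff `v ∩ σ_i(w) = ∅`. -/
def GGraph (n k i : ℕ) : SimpleGraph {s : Finset (Fin n) // s.card = k} where
  Adj v w := v ≠ w ∧ Disjoint v.1 (w.1.image (sigmaPerm n i))
  symm := by
    constructor
    rintro v w ⟨h1, h2⟩
    refine ⟨h1.symm, ?_⟩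
    rw [Finset.disjoint_left] at h2 ⊢
    intro a haw hav
    rcases Finset.mem_image.mp hav with ⟨b, hbv, hba⟩
    refine h2 hbv (Finset.mem_image.mpr ⟨a, haw, ?_⟩)
    rw [← hba]
    exact (sigmaFinFun_invol n i) b
  loopless := ⟨fun _ h => h.1 rfl⟩

/-- The Kronecker cover `K₂ × G`: vertex set `{0,1} × V(G)`, with `(a,v)` adjacent to
`(b,w)` iff `a ≠ b` and `v` is adjacent to `w` in `G`. -/
def kroneckerCover {V : Type*} (G : SimpleGraph V) : SimpleGraph (Fin 2 × V) where
  Adj x y := x.1 ≠ y.1 ∧ G.Adj x.2 y.2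
  symm := ⟨fun _ _ h => ⟨h.1.symm, h.2.symm⟩⟩
  loopless := ⟨fun _ h => h.1 rfl⟩

/-!
Since `H(n,k)` is connected, an isomorphism `K₂ × G ≅ H(n,k)` respects the bipartition, so it
yields bijections `f, g` from `V(G)` onto the `k`-subsets with `v ~ w ↔ f v ∩ g w = ∅`; as `G`
is symmetric, `(g ∘ f⁻¹, f ∘ g⁻¹)` is a side-preserving automorphism of `H(n,k)`. Counting
common neighbours shows that such an automorphism preserves the Johnson adjacency
`|S ∩ T| = k - 1`, and an injective endomorphism of the Johnson graph `J(n,k)`, `n > 2k`, is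
induced by a permutation `π` of `[n]`: the large cliques of `J(n,j)` are the stars of
`(j-1)`-sets, which lets one descend from `J(n,j)` to `J(n,j-1)` and finally to points. Then
`g = π ∘ f` and `f = π ∘ g`, so `π` is an involution. Since `G` has no loops, no `k`-set is
disjoint from its `π`-image, so `π` has `i < k` two-cycles; being conjugate to `σ_i`, it turns
`G` into `G_i(n,k)`.
-/

open Finset

namespace Finset

variable {α : Type*} [DecidableEq α]

theorem card_inter_add_one_of_subset {A B C : Finset α} {j : ℕ} (hA : #A = j) (hB : #B = j)
    (hAB : A ≠ B) (hAC : A ⊆ C) (hBC : B ⊆ C) (hC : #C = j + 1) : #(A ∩ B) + 1 = j := by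
  have hunion : #(A ∪ B) ≤ j + 1 := hC ▸ card_le_card (union_subset hAC hBC)
  have hlt : #A < #(A ∪ B) := by
    refine card_lt_card (ssubset_of_subset_of_ne subset_union_left fun h => hAB ?_)
    refine (eq_of_subset_of_card_le ?_ (by omega)).symm
    rw [h]; exact subset_union_right
  have := card_union_add_card_inter A B
  omega

theorem card_inter_of_subset_inter {A B R : Finset α} {j : ℕ} (hA : #A = j + 1)
    (hB : #B = j + 1) (hAB : A ≠ B) (hRA : R ⊆ A) (hRB : R ⊆ B) (hR : #R = j) :
    #(A ∩ B) = j := by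
  have hle : j ≤ #(A ∩ B) := hR ▸ card_le_card (subset_inter hRA hRB)
  have hlt : #(A ∩ B) < #A := by
    refine card_lt_card (ssubset_of_subset_of_ne inter_subset_left fun h => hAB ?_)
    refine eq_of_subset_of_card_le ?_ (by omega)
    rw [← h]; exact inter_subset_right
  omega

theorem inter_subset_or_subset_union {S A B : Finset α} {j : ℕ} (hS : #S = j + 1)
    (hA : j ≤ #(S ∩ A)) (hB : j ≤ #(S ∩ B)) (hAB : #(A ∩ B) ≤ j) :
    A ∩ B ⊆ S ∨ S ⊆ A ∪ B := by
  refine or_iff_not_imp_right.2 fun hSAB => ?_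
  have hsmall : #(S ∩ (A ∪ B)) ≤ j := by
    have := card_lt_card (ssubset_of_subset_of_ne inter_subset_left
      fun h : S ∩ (A ∪ B) = S => hSAB (h ▸ inter_subset_right))
    omega
  have hSA : S ∩ A = S ∩ (A ∪ B) :=
    eq_of_subset_of_card_le (inter_subset_inter_left subset_union_left) (by omega)
  have hSB : S ∩ B = S ∩ (A ∪ B) :=
    eq_of_subset_of_card_le (inter_subset_inter_left subset_union_right) (by omega)
  have hsub : S ∩ A ⊆ A ∩ B := fun x hx => by
    have hx' : x ∈ S ∩ B := hSB ▸ hSA ▸ hx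
    exact mem_inter.2 ⟨(mem_inter.1 hx).2, (mem_inter.1 hx').2⟩
  rw [← eq_of_subset_of_card_le hsub (by omega)]
  exact inter_subset_left

variable [Fintype α] {k : ℕ}

theorem subset_of_forall_disjoint_imp {S T : Finset α} (hk : 0 < k) (hS : k ≤ #Sᶜ)
    (h : ∀ U : {s : Finset α // #s = k}, Disjoint U.1 S → Disjoint U.1 T) : T ⊆ S := by
  intro x hxT
  by_contra hxS
  obtain ⟨U, hxU, hUS, hU⟩ :=
    exists_subsuperset_card_eq (singleton_subset_iff.2 (mem_compl.2 hxS)) (by simpa) hS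
  exact disjoint_left.1 (h ⟨U, hU⟩ (subset_compl_iff_disjoint_right.1 hUS))
    (singleton_subset_iff.1 hxU) hxT

theorem eq_of_forall_disjoint_iff {S T : Finset α} (hk : 0 < k) (hS : k ≤ #Sᶜ)
    (hT : k ≤ #Tᶜ) (h : ∀ U : {s : Finset α // #s = k}, Disjoint U.1 S ↔ Disjoint U.1 T) :
    S = T :=
  (subset_of_forall_disjoint_imp hk hT fun U => (h U).2).antisymm
    (subset_of_forall_disjoint_imp hk hS fun U => (h U).1)

theorem card_filter_disjoint_eq_choose (A : Finset α) :
    #{U : {s : Finset α // #s = k} | Disjoint A U.1} = (Fintype.card α - #A).choose k := by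
  rw [← card_compl, ← card_powersetCard, ← card_map (Function.Embedding.subtype _)]
  congr 1
  ext s
  simp [mem_powersetCard, subset_compl_iff_disjoint_left, and_comm]

end Finset

theorem Nat.choose_lt_choose_of_lt {m m' k : ℕ} (hk : 0 < k) (hkm' : k ≤ m') (h : m < m') :
    m.choose k < m'.choose k := by
  obtain ⟨k, rfl⟩ : ∃ k', k = k' + 1 := ⟨k - 1, by omega⟩
  obtain ⟨m', rfl⟩ : ∃ m'', m' = m'' + 1 := ⟨m' - 1, by omega⟩
  rw [Nat.choose_succ_succ']
  have := Nat.choose_pos (show k ≤ m' by omega)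
  have := Nat.choose_le_choose (k + 1) (show m ≤ m' by omega)
  omega

section Johnson

variable {α : Type*} [DecidableEq α]

variable (α) in
def johnsonGraph (j : ℕ) : SimpleGraph {s : Finset α // #s = j} where
  Adj S T := #(S.1 ∩ T.1) + 1 = j
  symm := ⟨fun S T h => by rwa [inter_comm]⟩
  loopless := ⟨fun S h => by simp [S.2] at h⟩

@[simp]
theorem johnsonGraph_adj {j : ℕ} {S T : {s : Finset α // #s = j}} :
    (johnsonGraph α j).Adj S T ↔ #(S.1 ∩ T.1) + 1 = j :=
  Iff.rfl

theorem johnsonGraph_preconnected {j : ℕ} : (johnsonGraph α j).Preconnected := by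
  intro S T
  suffices ∀ d (S : {s : Finset α // #s = j}), #(S.1 \ T.1) = d →
      (johnsonGraph α j).Reachable S T from this _ S rfl
  intro d
  induction d with
  | zero =>
    intro S hS
    rw [card_eq_zero, sdiff_eq_empty_iff_subset] at hS
    rw [Subtype.ext (eq_of_subset_of_card_le hS (by rw [S.2, T.2]))]
  | succ d ih =>
    intro S hS
    obtain ⟨s, hs⟩ : (S.1 \ T.1).Nonempty := card_pos.1 (by omega)
    obtain ⟨t, ht⟩ : (T.1 \ S.1).Nonempty :=
      card_pos.1 (by rw [card_sdiff_comm (T.2.trans S.2.symm)]; omega)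
    rw [mem_sdiff] at hs ht
    have hj : 0 < j := S.2 ▸ card_pos.2 ⟨s, hs.1⟩
    have hts : t ∉ S.1.erase s := fun h => ht.2 (mem_of_mem_erase h)
    let S' : {s : Finset α // #s = j} := ⟨insert t (S.1.erase s), by
      rw [card_insert_of_notMem hts, card_erase_of_mem hs.1, S.2]; omega⟩
    have hadj : (johnsonGraph α j).Adj S S' := by
      have : S.1 ∩ insert t (S.1.erase s) = S.1.erase s := by grind
      rw [johnsonGraph_adj, this, card_erase_of_mem hs.1, S.2]
      omega
    have hS' : #(S'.1 \ T.1) = d := by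
      have : insert t (S.1.erase s) \ T.1 = (S.1 \ T.1).erase s := by grind
      simp only [S', this, card_erase_of_mem (mem_sdiff.2 hs), hS, Nat.add_sub_cancel]
    exact hadj.reachable.trans (ih S' hS')

namespace johnsonGraph

theorem exists_subset_of_isNClique {j m : ℕ} (hm : j + 3 ≤ m)
    {s : Finset {t : Finset α // #t = j + 1}} (hs : (johnsonGraph α (j + 1)).IsNClique m s) :
    ∃ R : Finset α, #R = j ∧ ∀ S ∈ s, R ⊆ S.1 := by
  have hadj : ∀ S ∈ s, ∀ T ∈ s, S ≠ T → #(S.1 ∩ T.1) = j := fun S hS T hT h => by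
    have := hs.isClique hS hT h
    rw [johnsonGraph_adj] at this
    omega
  have hinter : ∀ S ∈ s, ∀ T ∈ s, j ≤ #(S.1 ∩ T.1) := fun S hS T hT => by
    obtain rfl | h := eq_or_ne S T
    · rw [inter_self, S.2]; omega
    · exact (hadj S hS T hT h).ge
  obtain ⟨S₁, h₁, S₂, h₂, h₁₂⟩ := one_lt_card.1 (by rw [hs.card_eq]; omega)
  -- Either the clique lies in the `(j + 2)`-set `S₁ ∪ S₂`, which has only `j + 2` subsets of
  -- size `j + 1`, or all its members contain `S₁ ∩ S₂`.
  by_cases hall : ∀ S ∈ s, S.1 ⊆ S₁.1 ∪ S₂.1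
  · exfalso
    have hC : #(S₁.1 ∪ S₂.1) = j + 2 := by
      have := card_union_add_card_inter S₁.1 S₂.1
      rw [S₁.2, S₂.2, hadj S₁ h₁ S₂ h₂ h₁₂] at this
      omega
    have hsub : s.map (.subtype _) ⊆ powersetCard (j + 1) (S₁.1 ∪ S₂.1) := by
      simp only [subset_iff, mem_map, Function.Embedding.coe_subtype, mem_powersetCard]
      rintro _ ⟨S, hS, rfl⟩
      exact ⟨hall S hS, S.2⟩
    have := card_le_card hsub
    rw [card_map, card_powersetCard, hC, hs.card_eq, Nat.choose_succ_self_right] at this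
    omega
  obtain ⟨S₃, h₃, hS₃⟩ := not_forall₂.1 hall
  have h₁₃ : S₁ ≠ S₃ := by rintro rfl; exact hS₃ subset_union_left
  have h₂₃ : S₂ ≠ S₃ := by rintro rfl; exact hS₃ subset_union_right
  have hR₃ : S₁.1 ∩ S₂.1 ⊆ S₃.1 :=
    (inter_subset_or_subset_union S₃.2 (hinter S₃ h₃ S₁ h₁) (hinter S₃ h₃ S₂ h₂)
      (hadj S₁ h₁ S₂ h₂ h₁₂).le).resolve_right hS₃
  refine ⟨S₁.1 ∩ S₂.1, hadj S₁ h₁ S₂ h₂ h₁₂, fun S hS => ?_⟩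
  obtain hR | hS₁₂ := inter_subset_or_subset_union S.2 (hinter S hS S₁ h₁)
    (hinter S hS S₂ h₂) (hadj S₁ h₁ S₂ h₂ h₁₂).le
  · exact hR
  obtain hR | hS₁₃ := inter_subset_or_subset_union S.2 (hinter S hS S₁ h₁)
    (hinter S hS S₃ h₃) (hadj S₁ h₁ S₃ h₃ h₁₃).le
  · exact (subset_inter inter_subset_left hR₃).trans hR
  have h₂₃eq : S₂.1 ∩ S₃.1 = S₁.1 ∩ S₂.1 := (eq_of_subset_of_card_le
    (subset_inter inter_subset_right hR₃)
    (by rw [hadj S₂ h₂ S₃ h₃ h₂₃, hadj S₁ h₁ S₂ h₂ h₁₂])).symm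
  have hSS₁ : S.1 ⊆ S₁.1 := fun x hx => by
    have := hS₁₂ hx
    have := hS₁₃ hx
    have : x ∈ S₂.1 ∩ S₃.1 → x ∈ S₁.1 ∩ S₂.1 := (h₂₃eq ▸ ·)
    grind
  rw [eq_of_subset_of_card_le hSS₁ (by rw [S.2, S₁.2])]
  exact inter_subset_left

variable [Fintype α]

def star {j : ℕ} (R : {s : Finset α // #s = j}) : Finset {s : Finset α // #s = j + 1} :=
  {S | R.1 ⊆ S.1}

theorem mem_star {j : ℕ} {R : {s : Finset α // #s = j}} {S : {s : Finset α // #s = j + 1}} :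
    S ∈ star R ↔ R.1 ⊆ S.1 := by
  simp [star]

theorem card_star {j : ℕ} (R : {s : Finset α // #s = j}) : #(star R) = Fintype.card α - j := by
  have hcompl : #R.1ᶜ = Fintype.card α - j := by rw [card_compl, R.2]
  rw [← hcompl]
  refine (card_bij
    (fun x hx => ⟨insert x R.1, by rw [card_insert_of_notMem (mem_compl.1 hx), R.2]⟩)
    (fun x _ => mem_star.2 (subset_insert x R.1)) (fun x hx y _ h => ?_) fun S hS => ?_).symm
  · exact (insert_inj (mem_compl.1 hx)).1 (congrArg Subtype.val h)
  · obtain ⟨x, hx, h⟩ := exists_eq_insert_iff.2 ⟨mem_star.1 hS, by rw [R.2, S.2]⟩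
    exact ⟨x, mem_compl.2 hx, Subtype.ext h⟩

theorem isClique_star {j : ℕ} (R : {s : Finset α // #s = j}) :
    (johnsonGraph α (j + 1)).IsClique (star R : Set _) := fun S hS T hT hST => by
  rw [johnsonGraph_adj, card_inter_of_subset_inter S.2 T.2 (Subtype.coe_injective.ne hST)
    (mem_star.1 hS) (mem_star.1 hT) R.2]

theorem exists_injective_hom_pred {j : ℕ} (hn : 2 * (j + 1) < Fintype.card α)
    (u : johnsonGraph α (j + 1) →g johnsonGraph α (j + 1)) (hu : Function.Injective u) :
    ∃ v : johnsonGraph α j →g johnsonGraph α j, Function.Injective v ∧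
      ∀ R S, R.1 ⊆ S.1 → (v R).1 ⊆ (u S).1 := by
  -- The star of `R` is a clique of size `|α| - j ≥ j + 3`, so its image lies in a star.
  have hcommon : ∀ R : {s : Finset α // #s = j},
      ∃ R' : {s : Finset α // #s = j}, ∀ S ∈ star R, R'.1 ⊆ (u S).1 := by
    intro R
    have hclique : (johnsonGraph α (j + 1)).IsNClique (Fintype.card α - j)
        ((star R).map ⟨u, hu⟩) := by
      refine ⟨?_, by rw [card_map, card_star]⟩
      rw [coe_map]
      rintro _ ⟨S, hS, rfl⟩ _ ⟨T, hT, rfl⟩ hne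
      exact u.map_adj (isClique_star R hS hT fun h => hne (h ▸ rfl))
    obtain ⟨R', hR', h⟩ := exists_subset_of_isNClique (by omega) hclique
    exact ⟨⟨R', hR'⟩, fun S hS => h _ (mem_map_of_mem _ hS)⟩
  choose v hv using hcommon
  have hmap : ∀ R, (star R).map ⟨u, hu⟩ = star (v R) := fun R => by
    refine eq_of_subset_of_card_le ?_ (by rw [card_map, card_star, card_star])
    simp only [subset_iff, mem_map, Function.Embedding.coeFn_mk]
    rintro _ ⟨S, hS, rfl⟩
    exact mem_star.2 (hv R S hS)
  have hrev : ∀ R S, (v R).1 ⊆ (u S).1 → R.1 ⊆ S.1 := fun R S h => by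
    obtain ⟨S', hS', hS'S⟩ := mem_map.1 ((hmap R).symm ▸ mem_star.2 h)
    exact hu hS'S ▸ mem_star.1 hS'
  have hinj : Function.Injective v := by
    intro R T h
    refine Subtype.ext (eq_of_subset_of_card_le (fun x hxT => ?_) (by rw [R.2, T.2])).symm
    by_contra hxR
    obtain ⟨y, hy⟩ : (insert x R.1)ᶜ.Nonempty := by
      rw [← card_pos, card_compl, card_insert_of_notMem hxR, R.2]
      omega
    rw [mem_compl, mem_insert, not_or] at hy
    let S : {s : Finset α // #s = j + 1} :=
      ⟨insert y R.1, by rw [card_insert_of_notMem hy.2, R.2]⟩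
    have hTS := hrev T S (h ▸ hv R S (mem_star.2 (subset_insert y R.1)))
    rcases mem_insert.1 (hTS hxT) with rfl | hx
    · exact hy.1 rfl
    · exact hxR hx
  refine ⟨⟨v, fun {R T} hRT => ?_⟩, hinj, fun R S h => hv R S (mem_star.2 h)⟩
  have hRT' : #(R.1 ∪ T.1) = j + 1 := by
    have := card_union_add_card_inter R.1 T.1
    rw [johnsonGraph_adj] at hRT
    rw [R.2, T.2] at this
    omega
  let S : {s : Finset α // #s = j + 1} := ⟨R.1 ∪ T.1, hRT'⟩
  exact card_inter_add_one_of_subset (v R).2 (v T).2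
    (Subtype.coe_injective.ne (hinj.ne ((johnsonGraph α j).ne_of_adj hRT)))
    (hv R S (mem_star.2 subset_union_left)) (hv T S (mem_star.2 subset_union_right)) (u S).2

theorem exists_perm_of_injective {j : ℕ} (hn : 2 * j < Fintype.card α)
    (u : johnsonGraph α j →g johnsonGraph α j) (hu : Function.Injective u) :
    ∃ π : Equiv.Perm α, ∀ S, (u S).1 = S.1.image π := by
  induction j with
  | zero => exact ⟨1, fun S => by simp [card_eq_zero.1 (u S).2, card_eq_zero.1 S.2]⟩
  | succ j ih =>
    obtain rfl | hj := j.eq_zero_or_pos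
    · have hsingleton : ∀ x : α, ∃ y, (u ⟨{x}, card_singleton x⟩).1 = {y} :=
        fun x => card_eq_one.1 (u _).2
      choose p hp using hsingleton
      have hp_inj : Function.Injective p := fun x y h => by
        have := @hu ⟨{x}, card_singleton x⟩ ⟨{y}, card_singleton y⟩
          (Subtype.ext (by rw [hp, hp, h]))
        exact singleton_injective (congrArg Subtype.val this)
      refine ⟨Equiv.ofBijective p (Finite.injective_iff_bijective.1 hp_inj), fun S => ?_⟩
      obtain ⟨x, hx⟩ := card_eq_one.1 S.2
      obtain rfl : S = ⟨{x}, card_singleton x⟩ := Subtype.ext hx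
      rw [hp, image_singleton, Equiv.ofBijective_apply]
    · obtain ⟨v, hv, hvu⟩ := exists_injective_hom_pred hn u hu
      obtain ⟨π, hπ⟩ := ih (by omega) v hv
      refine ⟨π, fun S => (eq_of_subset_of_card_le (fun y hy => ?_) ?_).symm⟩
      · obtain ⟨x, hxS, rfl⟩ := mem_image.1 hy
        obtain ⟨t, htS, htx⟩ := exists_mem_ne (by rw [S.2]; omega) x
        let R : {s : Finset α // #s = j} :=
          ⟨S.1.erase t, by rw [card_erase_of_mem htS, S.2]; rfl⟩
        refine hvu R S (erase_subset t S.1) ?_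
        rw [hπ]
        exact mem_image_of_mem π (mem_erase.2 ⟨htx.symm, hxS⟩)
      · rw [(u S).2, card_image_of_injective _ π.injective, S.2]

end johnsonGraph

end Johnson

section KneserAutomorphism

variable {α : Type*} [DecidableEq α] [Fintype α] {k : ℕ}

theorem johnsonGraph_adj_of_disjoint_iff (hk : 0 < k) (hn : 2 * k < Fintype.card α)
    (a b : {s : Finset α // #s = k} ≃ {s : Finset α // #s = k})
    (h : ∀ S T, Disjoint S.1 T.1 ↔ Disjoint (a S).1 (b T).1) {S T : {s : Finset α // #s = k}}
    (hST : (johnsonGraph α k).Adj S T) : (johnsonGraph α k).Adj (a S) (a T) := by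
  -- `b` maps the common neighbours of `S, T` in `H(α,k)` onto those of `a S, a T`, and their
  -- number `C(|α| - |S ∪ T|, k)` determines `|S ∪ T|` as long as it is nonzero.
  have hcount : (Fintype.card α - #(S.1 ∪ T.1)).choose k =
      (Fintype.card α - #((a S).1 ∪ (a T).1)).choose k := by
    rw [← card_filter_disjoint_eq_choose, ← card_filter_disjoint_eq_choose]
    refine card_equiv b fun U => ?_
    simp only [mem_filter, mem_univ, true_and, disjoint_union_left, h S, h T]
  have hunion : #(S.1 ∪ T.1) = k + 1 := by
    have := card_union_add_card_inter S.1 T.1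
    rw [johnsonGraph_adj] at hST
    rw [S.2, T.2] at this
    omega
  have hne : (a S).1 ≠ (a T).1 :=
    Subtype.coe_injective.ne (a.injective.ne ((johnsonGraph α k).ne_of_adj hST))
  have hge : k + 1 ≤ #((a S).1 ∪ (a T).1) := by
    refine (card_lt_card (ssubset_of_subset_of_ne subset_union_left fun h' => hne ?_)).trans_le' ?_
    · exact (eq_of_subset_of_card_le (h' ▸ subset_union_right) (by rw [(a S).2, (a T).2])).symm
    · rw [(a S).2]
  have hle : #((a S).1 ∪ (a T).1) ≤ k + 1 := by
    by_contra! hlt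
    rw [hunion] at hcount
    have := Nat.choose_lt_choose_of_lt hk (show k ≤ Fintype.card α - (k + 1) by omega)
      (show Fintype.card α - #((a S).1 ∪ (a T).1) < Fintype.card α - (k + 1) by
        have := card_le_univ ((a S).1 ∪ (a T).1)
        omega)
    omega
  exact card_inter_add_one_of_subset (a S).2 (a T).2 hne subset_union_left subset_union_right
    (le_antisymm hle hge)

theorem exists_perm_of_disjoint_iff (hk : 0 < k) (hn : 2 * k < Fintype.card α)
    (a b : {s : Finset α // #s = k} ≃ {s : Finset α // #s = k})
    (h : ∀ S T, Disjoint S.1 T.1 ↔ Disjoint (a S).1 (b T).1) :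
    ∃ π : Equiv.Perm α, ∀ S, (a S).1 = S.1.image π ∧ (b S).1 = S.1.image π := by
  obtain ⟨π, hπ⟩ := johnsonGraph.exists_perm_of_injective hn
    ⟨a, johnsonGraph_adj_of_disjoint_iff hk hn a b h⟩ a.injective
  have ha : ∀ S, (a S).1 = S.1.image π := hπ
  refine ⟨π, fun T => ⟨ha T, eq_of_forall_disjoint_iff hk ?_ ?_ fun U => ?_⟩⟩
  · rw [card_compl, (b T).2]; omega
  · rw [card_compl, card_image_of_injective _ π.injective, T.2]; omega
  · obtain ⟨S, rfl⟩ := a.surjective U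
    rw [← h, ha, disjoint_image π.injective]

end KneserAutomorphism

namespace Equiv.Perm

variable {α : Type*} [DecidableEq α] [Fintype α]

theorem isConj_of_sq_eq_one {σ τ : Perm α} (hσ : σ ^ 2 = 1) (hτ : τ ^ 2 = 1)
    (h : #σ.support = #τ.support) : IsConj σ τ := by
  have hσ' := σ.sum_cycleType
  have hτ' := τ.sum_cycleType
  rw [cycleType_of_pow_prime_eq_one hσ, Multiset.sum_replicate, smul_eq_mul] at hσ'
  rw [cycleType_of_pow_prime_eq_one hτ, Multiset.sum_replicate, smul_eq_mul] at hτ'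
  rw [isConj_iff_cycleType_eq, cycleType_of_pow_prime_eq_one hσ, cycleType_of_pow_prime_eq_one hτ]
  congr 1
  omega

theorem eq_one_of_forall_image_eq {σ : Perm α} {k : ℕ} (hk : 0 < k) (hkn : k < Fintype.card α)
    (h : ∀ S : {s : Finset α // #s = k}, S.1.image σ = S.1) : σ = 1 := by
  ext x
  by_contra hx
  obtain ⟨U, hxU, hU, hUk⟩ := exists_subsuperset_card_eq
    (singleton_subset_iff.2 (mem_compl.2 (notMem_singleton.2 (Ne.symm hx))))
    (by simpa) (show k ≤ #{σ x}ᶜ by rw [card_compl, card_singleton]; omega)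
  have hσx : σ x ∈ U := by
    rw [← show U.image σ = U from h ⟨U, hUk⟩]
    exact mem_image_of_mem σ (singleton_subset_iff.1 hxU)
  exact mem_compl.1 (hU hσx) (mem_singleton_self _)

end Equiv.Perm

section KroneckerCover

variable {V W : Type*} {G : SimpleGraph W} {H : SimpleGraph V}

@[simp]
theorem kroneckerCover_adj {x y : Fin 2 × V} :
    (kroneckerCover H).Adj x y ↔ x.1 ≠ y.1 ∧ H.Adj x.2 y.2 :=
  Iff.rfl

theorem kroneckerCover.fst_eq_iff_even_length {x y : Fin 2 × V}
    (p : (kroneckerCover H).Walk x y) : x.1 = y.1 ↔ Even p.length := by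
  induction p with
  | nil => simp
  | cons hadj _ ih =>
    rw [SimpleGraph.Walk.length_cons, Nat.even_add_one, ← ih]
    have := hadj.1
    omega

theorem SimpleGraph.Iso.fst_eq_iff_of_kroneckerCover (hH : (kroneckerCover H).Preconnected)
    (Φ : kroneckerCover G ≃g kroneckerCover H) (x y : Fin 2 × W) :
    (Φ x).1 = (Φ y).1 ↔ x.1 = y.1 := by
  obtain ⟨p⟩ := Φ.preconnected_iff.2 hH x y
  have := kroneckerCover.fst_eq_iff_even_length (p.map Φ.toHom)
  rw [SimpleGraph.Walk.length_map] at this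
  exact this.trans (kroneckerCover.fst_eq_iff_even_length p).symm

theorem SimpleGraph.Iso.bijective_snd_of_kroneckerCover (hH : (kroneckerCover H).Preconnected)
    (Φ : kroneckerCover G ≃g kroneckerCover H) (c : Fin 2) :
    Function.Bijective fun v => (Φ (c, v)).2 := by
  refine ⟨fun v w hvw => ?_, fun S => ?_⟩
  · have := Φ.injective
      (Prod.ext ((Φ.fst_eq_iff_of_kroneckerCover hH (c, v) (c, w)).2 rfl) hvw)
    exact (Prod.mk.inj this).2
  · have hne : (Φ.symm (0, S)).1 ≠ (Φ.symm (1, S)).1 := by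
      rw [Ne, ← Φ.fst_eq_iff_of_kroneckerCover hH]
      simp
    obtain ⟨d, hd⟩ : ∃ d, (Φ.symm (d, S)).1 = c := by
      rcases (show (Φ.symm (0, S)).1 = c ∨ (Φ.symm (1, S)).1 = c by omega) with h | h
      exacts [⟨0, h⟩, ⟨1, h⟩]
    refine ⟨(Φ.symm (d, S)).2, ?_⟩
    dsimp only
    rw [← hd, Prod.mk.eta, Φ.apply_symm_apply]

theorem exists_equiv_adj_iff_of_kroneckerCover_iso (hH : (kroneckerCover H).Preconnected)
    (Φ : kroneckerCover G ≃g kroneckerCover H) :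
    ∃ f g : W ≃ V, ∀ v w, G.Adj v w ↔ H.Adj (f v) (g w) := by
  refine ⟨.ofBijective _ (Φ.bijective_snd_of_kroneckerCover hH 0),
    .ofBijective _ (Φ.bijective_snd_of_kroneckerCover hH 1), fun v w => ?_⟩
  have hlayer : (Φ (0, v)).1 ≠ (Φ (1, w)).1 := by
    rw [Ne, Φ.fst_eq_iff_of_kroneckerCover hH]
    simp
  have := Φ.map_adj_iff (v := (0, v)) (w := (1, w))
  simp only [kroneckerCover_adj, ne_eq, zero_ne_one, not_false_eq_true, true_and] at this
  rw [← this, and_iff_right hlayer]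
  rfl

end KroneckerCover

section Kneser

variable {n k i : ℕ}

theorem kneserGraph_adj_iff (hk : 0 < k) {S T : {s : Finset (Fin n) // #s = k}} :
    (kneserGraph n k).Adj S T ↔ Disjoint S.1 T.1 := by
  refine ⟨And.right, fun h => ⟨?_, h⟩⟩
  rintro rfl
  rw [disjoint_self_iff_empty] at h
  have := S.2
  rw [h, card_empty] at this
  omega

theorem kroneckerCover_kneserGraph_preconnected (hk : 0 < k) (hn : 2 * k < n) :
    (kroneckerCover (kneserGraph n k)).Preconnected := by
  have hadj : ∀ c d (S U : {s : Finset (Fin n) // #s = k}), c ≠ d → Disjoint S.1 U.1 →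
      (kroneckerCover (kneserGraph n k)).Adj (c, S) (d, U) :=
    fun c d S U hcd hSU => ⟨hcd, (kneserGraph_adj_iff hk).2 hSU⟩
  have hlayer : ∀ c (S T : {s : Finset (Fin n) // #s = k}), (johnsonGraph (Fin n) k).Adj S T →
      (kroneckerCover (kneserGraph n k)).Reachable (c, S) (c, T) := by
    intro c S T hST
    have hunion : #(S.1 ∪ T.1) = k + 1 := by
      have := card_union_add_card_inter S.1 T.1
      rw [johnsonGraph_adj] at hST
      rw [S.2, T.2] at this
      omega
    obtain ⟨U, hU, hUk⟩ := exists_subset_card_eq (show k ≤ #(S.1 ∪ T.1)ᶜ by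
      rw [card_compl, hunion, Fintype.card_fin]; omega)
    rw [subset_compl_iff_disjoint_right, disjoint_union_right] at hU
    exact (hadj c (c + 1) S ⟨U, hUk⟩ (by omega) hU.1.symm).reachable.trans
      (hadj (c + 1) c ⟨U, hUk⟩ T (by omega) hU.2).reachable
  have hsame : ∀ c (S T : {s : Finset (Fin n) // #s = k}),
      (kroneckerCover (kneserGraph n k)).Reachable (c, S) (c, T) := by
    intro c S T
    obtain ⟨p⟩ := johnsonGraph_preconnected S T
    induction p with
    | nil => rfl
    | cons h _ ih => exact (hlayer c _ _ h).trans ih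
  rintro ⟨c, S⟩ ⟨d, T⟩
  obtain rfl | hcd := eq_or_ne c d
  · exact hsame c S T
  obtain ⟨U, hU, hUk⟩ := exists_subset_card_eq (show k ≤ #T.1ᶜ by
    rw [card_compl, T.2, Fintype.card_fin]; omega)
  exact (hsame c S ⟨U, hUk⟩).trans
    (hadj c d ⟨U, hUk⟩ T hcd (subset_compl_iff_disjoint_right.1 hU)).reachable

theorem sigmaPerm_val (h : 2 * i ≤ n) (x : Fin n) : (sigmaPerm n i x : ℕ) = sigmaNat i x := by
  have hlt : sigmaNat i x < n := by
    unfold sigmaNat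
    split_ifs <;> omega
  exact congrArg Fin.val (dif_pos hlt : sigmaFinFun n i x = ⟨sigmaNat i x, hlt⟩)

theorem sigmaPerm_sq : sigmaPerm n i ^ 2 = 1 :=
  Equiv.ext (sigmaFinFun_invol n i)

theorem card_support_sigmaPerm (h : 2 * i ≤ n) : #(sigmaPerm n i).support = 2 * i := by
  have : (sigmaPerm n i).support = ({x | (x : ℕ) < 2 * i} : Finset (Fin n)) := by
    ext x
    rw [Equiv.Perm.mem_support, mem_filter, Ne, Fin.ext_iff, sigmaPerm_val h]
    unfold sigmaNat
    split_ifs <;> simp <;> omega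
  rw [this, Fin.card_filter_val_lt]
  omega

theorem exists_disjoint_image_sigmaPerm (hki : k ≤ i) (h : 2 * i ≤ n) :
    ∃ S : {s : Finset (Fin n) // #s = k}, Disjoint S.1 (S.1.image (sigmaPerm n i)) := by
  let e : Fin k → Fin n := fun j => ⟨2 * j, by omega⟩
  have he : Function.Injective e := fun x y hxy => by
    have := congrArg Fin.val hxy
    simp only [e] at this
    omega
  refine ⟨⟨univ.image e, by rw [card_image_of_injective _ he, card_univ, Fintype.card_fin]⟩,
    ?_⟩
  rw [disjoint_left]
  intro a ha hσa
  obtain ⟨x, -, rfl⟩ := mem_image.1 ha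
  obtain ⟨_, hb, hxy⟩ := mem_image.1 hσa
  obtain ⟨y, -, rfl⟩ := mem_image.1 hb
  have := congrArg Fin.val hxy
  rw [sigmaPerm_val h] at this
  simp only [e, sigmaNat] at this
  split_ifs at this <;> omega

theorem nonempty_iso_GGraph_of_adj_iff {W : Type*} {G : SimpleGraph W}
    (e : W ≃ {s : Finset (Fin n) // #s = k})
    (h : ∀ v w, G.Adj v w ↔ Disjoint (e v).1 ((e w).1.image (sigmaPerm n i))) :
    Nonempty (G ≃g GGraph n k i) :=
  ⟨⟨e, fun {v w} => ⟨fun hadj => (h v w).2 hadj.2,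
    fun hG => ⟨e.injective.ne (G.ne_of_adj hG), (h v w).1 hG⟩⟩⟩⟩

theorem exists_equiv_adj_iff_image_sigmaPerm {W : Type*} {G : SimpleGraph W}
    {π : Equiv.Perm (Fin n)} (hπ : π ^ 2 = 1) (e : W ≃ {s : Finset (Fin n) // #s = k})
    (h : ∀ v w, G.Adj v w ↔ Disjoint (e v).1 ((e w).1.image π)) :
    ∃ i, 2 * i ≤ n ∧ ∃ e' : W ≃ {s : Finset (Fin n) // #s = k},
      ∀ v w, G.Adj v w ↔ Disjoint (e' v).1 ((e' w).1.image (sigmaPerm n i)) := by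
  set i := #π.support / 2
  have h2i : 2 * i = #π.support := Nat.mul_div_cancel' (Equiv.Perm.two_dvd_card_support hπ)
  have hin : 2 * i ≤ n := h2i ▸ (card_le_univ _).trans_eq (Fintype.card_fin n)
  obtain ⟨c, hc⟩ := Equiv.Perm.isConj_of_sq_eq_one sigmaPerm_sq hπ
    (by rw [card_support_sigmaPerm hin, h2i])
  set t : Equiv.Perm (Fin n) := ↑c⁻¹
  have hconj : t * π = sigmaPerm n i * t := hc.units_inv_symm_left.eq
  refine ⟨i, hin, e.trans ((Equiv.finsetCongr t).subtypeEquiv fun s => by simp), fun v w => ?_⟩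
  simp only [Equiv.trans_apply, Equiv.subtypeEquiv_apply, Equiv.finsetCongr_apply,
    map_eq_image, Equiv.coe_toEmbedding, image_image, ← Equiv.Perm.coe_mul, ← hconj]
  rw [Equiv.Perm.coe_mul, ← image_image, disjoint_image t.injective, h]

theorem exists_lt_nonempty_iso_GGraph {W : Type*} {G : SimpleGraph W}
    {π : Equiv.Perm (Fin n)} (hπ : π ^ 2 = 1) (e : W ≃ {s : Finset (Fin n) // #s = k})
    (h : ∀ v w, G.Adj v w ↔ Disjoint (e v).1 ((e w).1.image π)) :
    ∃ i < k, Nonempty (G ≃g GGraph n k i) := by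
  obtain ⟨i, hin, e', h'⟩ := exists_equiv_adj_iff_image_sigmaPerm hπ e h
  refine ⟨i, ?_, nonempty_iso_GGraph_of_adj_iff e' h'⟩
  by_contra! hki
  obtain ⟨S, hS⟩ := exists_disjoint_image_sigmaPerm hki hin
  obtain ⟨v, rfl⟩ := e'.surjective S
  exact G.loopless.irrefl v ((h' v v).2 hS)

end Kneser

/-- for `n > 2k`, `k ≥ 1`, every simple graph `G` whose Kronecker cover is
isomorphic to the bipartite Kneser graph `H(n,k) = K₂ × K(n,k)` is isomorphic to
`G_i(n,k)` for some `0 ≤ i < k`. -/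
theorem iso_GGraph_of_kroneckerCover_iso_bipartiteKneser (n k : ℕ)
    (hn : 2 * k < n) (hk : 1 ≤ k) {W : Type*} (G : SimpleGraph W)
    (h : Nonempty (kroneckerCover G ≃g kroneckerCover (kneserGraph n k))) :
    ∃ i, i < k ∧ Nonempty (G ≃g GGraph n k i) := by
  obtain ⟨Φ⟩ := h
  obtain ⟨f, g, hfg⟩ :=
    exists_equiv_adj_iff_of_kroneckerCover_iso (kroneckerCover_kneserGraph_preconnected hk hn) Φ
  simp only [kneserGraph_adj_iff hk] at hfg
  obtain ⟨π, hπ⟩ := exists_perm_of_disjoint_iff hk (by rwa [Fintype.card_fin])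
    (f.symm.trans g) (g.symm.trans f) fun S T => by
      obtain ⟨v, rfl⟩ := f.surjective S
      obtain ⟨w, rfl⟩ := g.surjective T
      simp [← hfg, G.adj_comm v w, disjoint_comm]
  have hg : ∀ v, (g v).1 = (f v).1.image π := fun v => by simpa using (hπ (f v)).1
  have hf : ∀ w, (f w).1 = (g w).1.image π := fun w => by simpa using (hπ (g w)).2
  have hπ2 : π ^ 2 = 1 := by
    refine Equiv.Perm.eq_one_of_forall_image_eq hk (by rw [Fintype.card_fin]; omega) fun S => ?_
    obtain ⟨v, rfl⟩ := f.surjective S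
    rw [sq, Equiv.Perm.coe_mul, ← image_image, ← hg, ← hf]
  exact exists_lt_nonempty_iso_GGraph hπ2 f fun v w => by rw [hfg, hg]
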